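/- arXiv:2011.14460 — 8 statements merged into one kernel-verified Lean document; each statement's English description precedes it below -/
import Mathlib

section
/- Let T be a sequence of length n over 𝔸, let I be a nonempty finite itemset, and let i, x be indices with 1 ≤ x ≤ i+1 ≤ n. Then I co-occurs in the window ω(i,x) if and only if max_{e∈I} tesla(T,e,i) < x (the maximum taken in ℕ∞). -/
/-- `tesla T e i` : the time elapsed since the last access of item `e` at index `i`,
i.e. `i - j` where `j` is the greatest index `j ≤ i` with `T j = e`, and `∞` if there
is no such index.  (Taking the infimum over all valid `j` of `i - j` picks out the
greatest such `j`; the infimum of the empty set in `ℕ∞` is `∞`.) -/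
noncomputable def tesla {𝔸 : Type*} {n : ℕ} (T : Fin n → 𝔸) (e : 𝔸) (i : ℕ) : ℕ∞ :=
  sInf {d : ℕ∞ | ∃ j : Fin n, (j : ℕ) ≤ i ∧ T j = e ∧ d = ((i - (j : ℕ) : ℕ) : ℕ∞)}

/-- `I` co-occurs in the window `ω(i,x) = {i-x+1, …, i}` of `T`. -/
def coOccursIn {𝔸 : Type*} {n : ℕ} (T : Fin n → 𝔸) (I : Finset 𝔸) (i x : ℕ) : Prop :=
  ∀ e ∈ I, ∃ j : Fin n, i + 1 - x ≤ (j : ℕ) ∧ (j : ℕ) ≤ i ∧ T j = e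

theorem tesla_lt_iff {𝔸 : Type*} {n : ℕ} (T : Fin n → 𝔸) (e : 𝔸) (i x : ℕ) :
    tesla T e i < x ↔ ∃ j : Fin n, i + 1 - x ≤ (j : ℕ) ∧ (j : ℕ) ≤ i ∧ T j = e := by
  simp only [tesla, sInf_lt_iff, Set.mem_ofPred_eq]
  constructor
  · rintro ⟨_, ⟨j, hji, hj, rfl⟩, hlt⟩
    exact ⟨j, by norm_cast at hlt; omega, hji, hj⟩
  · rintro ⟨j, hxj, hji, hj⟩
    exact ⟨_, ⟨j, hji, hj, rfl⟩, by norm_cast; omega⟩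

theorem coOccursIn_iff_forall_tesla_lt {𝔸 : Type*} {n : ℕ} (T : Fin n → 𝔸) (I : Finset 𝔸)
    (i x : ℕ) : coOccursIn T I i x ↔ ∀ e ∈ I, tesla T e i < x := by
  simp only [coOccursIn, tesla_lt_iff]

theorem cooccurs_iff_sup_tesla_lt_general {𝔸 : Type*} {n : ℕ} (T : Fin n → 𝔸)
    (I : Finset 𝔸) (i x : ℕ)
    (hx : 1 ≤ x) :
    coOccursIn T I i x ↔ I.sup (fun e => tesla T e i) < (x : ℕ∞) := by
  have hx_pos : (⊥ : ℕ∞) < x := by rw [bot_eq_zero']; exact_mod_cast hx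
  rw [Finset.sup_lt_iff hx_pos, coOccursIn_iff_forall_tesla_lt]

/-- Itemset `I` co-occurs in the window `ω(i,x)` iff `max_{e ∈ I} tesla(T,e,i) < x`. -/
theorem cooccurs_iff_sup_tesla_lt {𝔸 : Type*} {n : ℕ} (T : Fin n → 𝔸)
    (I : Finset 𝔸) (hI : I.Nonempty) (i x : ℕ)
    (hx : 1 ≤ x) (hxi : x ≤ i + 1) (hin : i + 1 ≤ n) :
    coOccursIn T I i x ↔ I.sup (fun e => tesla T e i) < (x : ℕ∞) :=
  cooccurs_iff_sup_tesla_lt_general T I i x hx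
end

section
/- Let T be a sequence of length n over 𝔸, let I be a nonempty finite itemset, and let 1 ≤ x ≤ n. Then co(T,I,x) = (n − x + 1) − |⋃_{e∈I} \overline{\{e\}}_x|, i.e., the co-occurrence count equals the total number n−x+1 of x-length windows minus the number of indices i ∈ {x−1,…,n−1} whose window ω(i,x) fails to contain at least one element of I. -/
/-- `co(T,I,x)` : the number of indices `i ∈ {x-1, …, n-1}` such that `I` co-occurs
in the window `ω(i,x)`. -/
noncomputable def coCount {𝔸 : Type*} {n : ℕ} (T : Fin n → 𝔸) (I : Finset 𝔸) (x : ℕ) : ℕ :=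
  {i : ℕ | x - 1 ≤ i ∧ i ≤ n - 1 ∧ coOccursIn T I i x}.ncard

/-- `Ā_x` : the set of indices `i ∈ {x-1, …, n-1}` whose window `ω(i,x)` contains
no element of `A`. -/
def avoidSet {𝔸 : Type*} {n : ℕ} (T : Fin n → 𝔸) (A : Finset 𝔸) (x : ℕ) : Set ℕ :=
  {i : ℕ | x - 1 ≤ i ∧ i ≤ n - 1 ∧
    ∀ j : Fin n, i + 1 - x ≤ (j : ℕ) → (j : ℕ) ≤ i → T j ∉ A}

/-! The `n - x + 1` windows of length `x` are indexed by their right ends `x - 1, …, n - 1`.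
Each window either contains all of `I` or misses some `e ∈ I`, i.e. lies in `avoidSet T {e} x`,
so the windows counted by `coCount` are exactly the complement of the union. -/

open Classical in
theorem coCount_eq_card_filter {𝔸 : Type*} {n : ℕ} (T : Fin n → 𝔸) (I : Finset 𝔸) (x : ℕ) :
    coCount T I x = ((Finset.Icc (x - 1) (n - 1)).filter (coOccursIn T I · x)).card := by
  rw [coCount, ← Set.ncard_coe_finset]
  congr 1
  ext i
  simp [and_assoc]

theorem mem_avoidSet_singleton {𝔸 : Type*} {n : ℕ} {T : Fin n → 𝔸} {e : 𝔸} {x i : ℕ} :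
    i ∈ avoidSet T {e} x ↔
      x - 1 ≤ i ∧ i ≤ n - 1 ∧ ∀ j : Fin n, i + 1 - x ≤ (j : ℕ) → (j : ℕ) ≤ i → T j ≠ e := by
  simp [avoidSet]

open Classical in
theorem iUnion_avoidSet_singleton {𝔸 : Type*} {n : ℕ} (T : Fin n → 𝔸) (I : Finset 𝔸)
    (x : ℕ) :
    ⋃ e ∈ I, avoidSet T {e} x =
      ↑((Finset.Icc (x - 1) (n - 1)).filter (¬ coOccursIn T I · x)) := by
  ext i
  simp only [Set.mem_iUnion, mem_avoidSet_singleton, exists_prop, Finset.mem_coe,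
    Finset.mem_filter, Finset.mem_Icc]
  unfold coOccursIn
  push Not
  exact ⟨fun ⟨e, he, hlo, hhi, hmiss⟩ => ⟨⟨hlo, hhi⟩, e, he, hmiss⟩,
    fun ⟨⟨hlo, hhi⟩, e, he, hmiss⟩ => ⟨e, he, hlo, hhi, hmiss⟩⟩

theorem card_window_indices {n x : ℕ} (hx : 1 ≤ x) (hxn : x ≤ n) :
    (Finset.Icc (x - 1) (n - 1)).card = n - x + 1 := by
  rw [Nat.card_Icc]
  omega

theorem coCount_eq_sub_card_union_general {𝔸 : Type*} {n : ℕ} (T : Fin n → 𝔸)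
    (I : Finset 𝔸) (x : ℕ) (hx : 1 ≤ x) (hxn : x ≤ n) :
    (coCount T I x : ℤ) =
      ((n : ℤ) - x + 1) - ((⋃ e ∈ I, avoidSet T {e} x).ncard : ℤ) := by
  classical
  have hsplit := Finset.card_filter_add_card_filter_not
    (s := Finset.Icc (x - 1) (n - 1)) (coOccursIn T I · x)
  rw [card_window_indices hx hxn] at hsplit
  rw [coCount_eq_card_filter, iUnion_avoidSet_singleton, Set.ncard_coe_finset]
  omega

/-- `co(T,I,x) = (n - x + 1) - |⋃_{e ∈ I} {e}̄_x|`. -/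
theorem coCount_eq_sub_card_union {𝔸 : Type*} {n : ℕ} (T : Fin n → 𝔸)
    (I : Finset 𝔸) (hI : I.Nonempty) (x : ℕ) (hx : 1 ≤ x) (hxn : x ≤ n) :
    (coCount T I x : ℤ) =
      ((n : ℤ) - x + 1) - ((⋃ e ∈ I, avoidSet T {e} x).ncard : ℤ) :=
  coCount_eq_sub_card_union_general T I x hx hxn
end

section
/- Let T be a sequence of length n over 𝔸, let I be a nonempty finite itemset, and let 1 ≤ x ≤ n. Then, by inclusion–exclusion, co(T,I,x) = (n − x + 1) − Σ_{∅ ≠ A ⊆ I} (−1)^{|A|+1} · |Ā_x|, the sum running over all nonempty subsets A of I. -/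
open Finset

/-!
Let `S = {x-1, …, n-1}` be the set of window ends and, for `e ∈ I`, let `M e ⊆ S` be the ends
of the windows missing `e`. Then `I` co-occurs exactly in the windows with end in
`S \ ⋃_{e ∈ I} M e`, and `Ā_x = ⋂_{e ∈ A} M e` for nonempty `A`, so the identity is
`#S = n - x + 1` combined with inclusion–exclusion for `#(⋃_{e ∈ I} M e)`.
-/

def windowEnds (n x : ℕ) : Finset ℕ := Icc (x - 1) (n - 1)

lemma card_windowEnds {n x : ℕ} (hx : 1 ≤ x) (hxn : x ≤ n) :
    (#(windowEnds n x) : ℤ) = n - x + 1 := by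
  rw [windowEnds, Nat.card_Icc]
  omega

section

variable {𝔸 : Type*} [DecidableEq 𝔸] {n : ℕ} (T : Fin n → 𝔸) (x : ℕ)

def windowEndsMissing (e : 𝔸) : Finset ℕ :=
  {i ∈ windowEnds n x | ∀ j : Fin n, i + 1 - x ≤ (j : ℕ) → (j : ℕ) ≤ i → T j ≠ e}

lemma biUnion_windowEndsMissing_subset (I : Finset 𝔸) :
    I.biUnion (windowEndsMissing T x) ⊆ windowEnds n x :=
  biUnion_subset.2 fun _ _ ↦ filter_subset _ _

lemma coCount_eq_card_sdiff (I : Finset 𝔸) :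
    coCount T I x = #(windowEnds n x \ I.biUnion (windowEndsMissing T x)) := by
  rw [coCount, ← Set.ncard_coe_finset]
  congr 1
  ext i
  simp only [Set.mem_ofPred_eq, coe_sdiff, Set.mem_sdiff, mem_coe, windowEnds, mem_Icc,
    coe_biUnion, Set.mem_iUnion, windowEndsMissing, mem_filter, coOccursIn]
  grind

lemma avoidSet_eq_inf' {A : Finset 𝔸} (hA : A.Nonempty) :
    avoidSet T A x = ↑(A.inf' hA (windowEndsMissing T x)) := by
  ext i
  rw [mem_coe, mem_inf']
  obtain ⟨e, he⟩ := hA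
  simp only [avoidSet, Set.mem_ofPred_eq, windowEndsMissing, mem_filter, windowEnds, mem_Icc]
  grind

end

theorem coCount_inclusion_exclusion_general {𝔸 : Type*} [DecidableEq 𝔸] {n : ℕ}
    (T : Fin n → 𝔸) (I : Finset 𝔸) (x : ℕ) (hx : 1 ≤ x) (hxn : x ≤ n) :
    (coCount T I x : ℤ) =
      ((n : ℤ) - x + 1) -
        ∑ A ∈ I.powerset.filter (fun A => A.Nonempty),
          (-1 : ℤ) ^ (A.card + 1) * ((avoidSet T A x).ncard : ℤ) := by
  have hsub := biUnion_windowEndsMissing_subset T x I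
  rw [← card_windowEnds hx hxn, coCount_eq_card_sdiff, ← card_sdiff_add_card_eq_card hsub,
    Nat.cast_add, add_sub_assoc, left_eq_add, sub_eq_zero, inclusion_exclusion_card_biUnion,
    ← sum_coe_sort (I.powerset.filter _)]
  refine Fintype.sum_congr _ _ fun A ↦ ?_
  rw [avoidSet_eq_inf', Set.ncard_coe_finset]

/-- Inclusion–exclusion:
`co(T,I,x) = (n - x + 1) - Σ_{∅ ≠ A ⊆ I} (-1)^(|A|+1) |Ā_x|`. -/
theorem coCount_inclusion_exclusion {𝔸 : Type*} [DecidableEq 𝔸] {n : ℕ}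
    (T : Fin n → 𝔸) (I : Finset 𝔸) (hI : I.Nonempty) (x : ℕ) (hx : 1 ≤ x) (hxn : x ≤ n) :
    (coCount T I x : ℤ) =
      ((n : ℤ) - x + 1) -
        ∑ A ∈ I.powerset.filter (fun A => A.Nonempty),
          (-1 : ℤ) ^ (A.card + 1) * ((avoidSet T A x).ncard : ℤ) :=
  coCount_inclusion_exclusion_general T I x hx hxn
end

section
/- Let T be a sequence of length n over 𝔸, let A ⊆ 𝔸 be a nonempty finite set, and let 1 ≤ x ≤ n. Then the number of x-length windows of T containing no element of A satisfies |Ā_x| = Σ_{k=x}^{n} (k − x + 1) · N_A(k); equivalently, |Ā_x| equals the sum, over all maximal A-gaps g of length at least x, of (length(g) − x + 1). -/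
/-- The interval `{a, …, b} ⊆ {0, …, n-1}` is an `A`-gap of `T` :
none of its entries lies in `A`. -/
def IsGap {𝔸 : Type*} {n : ℕ} (T : Fin n → 𝔸) (A : Finset 𝔸) (a b : ℕ) : Prop :=
  a ≤ b ∧ b < n ∧ ∀ j : Fin n, a ≤ (j : ℕ) → (j : ℕ) ≤ b → T j ∉ A

/-- A maximal `A`-gap : an `A`-gap not properly contained in any other `A`-gap. -/
def IsMaxGap {𝔸 : Type*} {n : ℕ} (T : Fin n → 𝔸) (A : Finset 𝔸) (a b : ℕ) : Prop :=
  IsGap T A a b ∧ ∀ a' b', IsGap T A a' b' → a' ≤ a → b ≤ b' → a' = a ∧ b' = b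

/-- `N_A(k)` : the number of maximal `A`-gaps of length `k`. -/
noncomputable def gapCount {𝔸 : Type*} {n : ℕ} (T : Fin n → 𝔸) (A : Finset 𝔸) (k : ℕ) : ℕ :=
  {p : ℕ × ℕ | IsMaxGap T A p.1 p.2 ∧ p.2 - p.1 + 1 = k}.ncard

open Finset

section Gaps

variable {𝔸 : Type*} {n : ℕ} {T : Fin n → 𝔸} {A : Finset 𝔸}

theorem IsGap.mono {a b a' b' : ℕ} (h : IsGap T A a b) (ha : a ≤ a') (hab : a' ≤ b')
    (hb : b' ≤ b) : IsGap T A a' b' :=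
  ⟨hab, hb.trans_lt h.2.1, fun j ha' hb' => h.2.2 j (ha.trans ha') (hb'.trans hb)⟩

theorem IsGap.exists_isMaxGap {a b : ℕ} (h : IsGap T A a b) :
    ∃ a' b', IsMaxGap T A a' b' ∧ a' ≤ a ∧ b ≤ b' := by
  classical
  let S := (range n ×ˢ range n).filter fun p => IsGap T A p.1 p.2 ∧ p.1 ≤ a ∧ b ≤ p.2
  have mem_S : ∀ p : ℕ × ℕ, p ∈ S ↔ IsGap T A p.1 p.2 ∧ p.1 ≤ a ∧ b ≤ p.2 := fun p => by
    simp only [S, mem_filter, mem_product, mem_range, and_iff_right_iff_imp]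
    exact fun hp => ⟨hp.1.1.trans_lt hp.1.2.1, hp.1.2.1⟩
  -- a longest gap containing `{a, …, b}` is maximal
  obtain ⟨p, hpS, hp_longest⟩ :=
    S.exists_max_image (fun p => p.2 - p.1) ⟨(a, b), (mem_S _).2 ⟨h, le_rfl, le_rfl⟩⟩
  obtain ⟨hp, hpa, hpb⟩ := (mem_S p).1 hpS
  refine ⟨p.1, p.2, ⟨hp, fun a' b' h' ha' hb' => ?_⟩, hpa, hpb⟩
  have := hp_longest (a', b') ((mem_S _).2 ⟨h', ha'.trans hpa, hpb.trans hb'⟩)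
  have := hp.1
  omega

theorem IsMaxGap.eq_of_mem {a₁ b₁ a₂ b₂ i : ℕ} (h₁ : IsMaxGap T A a₁ b₁)
    (h₂ : IsMaxGap T A a₂ b₂) (hi₁ : i ∈ Icc a₁ b₁) (hi₂ : i ∈ Icc a₂ b₂) :
    a₁ = a₂ ∧ b₁ = b₂ := by
  rw [mem_Icc] at hi₁ hi₂
  have hunion : IsGap T A (min a₁ a₂) (max b₁ b₂) := by
    refine ⟨by omega, max_lt h₁.1.2.1 h₂.1.2.1, fun j hj₁ hj₂ => ?_⟩
    by_cases hj : a₁ ≤ j ∧ j ≤ b₁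
    · exact h₁.1.2.2 j hj.1 hj.2
    · exact h₂.1.2.2 j (by omega) (by omega)
  have := h₁.2 _ _ hunion (min_le_left _ _) (le_max_left _ _)
  have := h₂.2 _ _ hunion (min_le_right _ _) (le_max_right _ _)
  omega

variable (T A)

noncomputable def maxGaps : Finset (ℕ × ℕ) := by
  classical
  exact (range n ×ˢ range n).filter fun p => IsMaxGap T A p.1 p.2

variable {T A}

theorem mem_maxGaps {p : ℕ × ℕ} : p ∈ maxGaps T A ↔ IsMaxGap T A p.1 p.2 := by
  classical
  simp only [maxGaps, mem_filter, mem_product, mem_range, and_iff_right_iff_imp]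
  exact fun hp => ⟨hp.1.1.trans_lt hp.1.2.1, hp.1.2.1⟩

theorem gapCount_eq_card (k : ℕ) :
    gapCount T A k = #{p ∈ maxGaps T A | p.2 - p.1 + 1 = k} := by
  rw [gapCount, ← Set.ncard_coe_finset]
  congr 1
  ext p
  simp [mem_maxGaps]

theorem pairwiseDisjoint_maxGaps :
    (maxGaps T A : Set (ℕ × ℕ)).PairwiseDisjoint fun p => Icc p.1 p.2 := by
  intro p hp q hq hpq
  refine disjoint_left.2 fun i hip hiq => hpq ?_
  obtain ⟨h₁, h₂⟩ := (mem_maxGaps.1 hp).eq_of_mem (mem_maxGaps.1 hq) hip hiq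
  exact Prod.ext h₁ h₂

theorem avoidSet_eq_biUnion_maxGaps {x : ℕ} (hx : 1 ≤ x) (hn : n ≠ 0) :
    avoidSet T A x = ↑((maxGaps T A).biUnion fun p => Icc (p.1 + x - 1) p.2) := by
  ext i
  simp only [avoidSet, Set.mem_ofPred_eq, coe_biUnion, Set.mem_iUnion, mem_coe, mem_Icc,
    mem_maxGaps, exists_prop, Prod.exists]
  constructor
  · rintro ⟨hxi, hin, hwindow⟩
    have hgap : IsGap T A (i + 1 - x) i := ⟨by omega, by omega, hwindow⟩
    obtain ⟨a, b, hmax, ha, hb⟩ := hgap.exists_isMaxGap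
    exact ⟨a, b, hmax, by omega, hb⟩
  · rintro ⟨a, b, hmax, hai, hib⟩
    have hgap := hmax.1.mono (a' := i + 1 - x) (b' := i) (by omega) (by omega) hib
    exact ⟨by omega, by have := hgap.2.1; omega, hgap.2.2⟩

theorem ncard_avoidSet {x : ℕ} (hx : 1 ≤ x) (hn : n ≠ 0) :
    (avoidSet T A x).ncard = ∑ p ∈ maxGaps T A, (p.2 - p.1 + 1 + 1 - x) := by
  have hdisj : (maxGaps T A : Set (ℕ × ℕ)).PairwiseDisjoint fun p => Icc (p.1 + x - 1) p.2 :=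
    pairwiseDisjoint_maxGaps.mono fun p => Icc_subset_Icc (by omega) le_rfl
  rw [avoidSet_eq_biUnion_maxGaps hx hn, Set.ncard_coe_finset, card_biUnion hdisj]
  refine sum_congr rfl fun p hp => ?_
  have := (mem_maxGaps.1 hp).1.1
  rw [Nat.card_Icc]
  omega

end Gaps

theorem card_avoidSet_eq_sum_gaps_general {𝔸 : Type*} {n : ℕ} (T : Fin n → 𝔸)
    (A : Finset 𝔸) (x : ℕ) (hx : 1 ≤ x) (hxn : x ≤ n) :
    (avoidSet T A x).ncard = ∑ k ∈ Finset.Icc x n, (k - x + 1) * gapCount T A k := by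
  let len : ℕ × ℕ → ℕ := fun p => p.2 - p.1 + 1
  calc (avoidSet T A x).ncard
      = ∑ p ∈ maxGaps T A, (len p + 1 - x) := ncard_avoidSet hx (by omega)
    _ = ∑ p ∈ maxGaps T A with len p ∈ Icc x n, (len p + 1 - x) := by
        refine (sum_filter_of_ne fun p hp hne => ?_).symm
        have := (mem_maxGaps.1 hp).1.2.1
        simp only [mem_Icc, len] at hne ⊢
        omega
    _ = ∑ k ∈ Icc x n, ∑ p ∈ maxGaps T A with len p = k, (len p + 1 - x) :=
        (sum_fiberwise_eq_sum_filter _ _ _ _).symm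
    _ = ∑ k ∈ Icc x n, (k - x + 1) * gapCount T A k := by
        refine sum_congr rfl fun k hk => ?_
        have hkx := (mem_Icc.1 hk).1
        rw [gapCount_eq_card, sum_congr rfl fun p hp => by rw [(mem_filter.1 hp).2],
          sum_const, smul_eq_mul, mul_comm, Nat.sub_add_comm hkx]

/-- `|Ā_x| = Σ_{k=x}^{n} (k - x + 1) · N_A(k)`. -/
theorem card_avoidSet_eq_sum_gaps {𝔸 : Type*} {n : ℕ} (T : Fin n → 𝔸)
    (A : Finset 𝔸) (hA : A.Nonempty) (x : ℕ) (hx : 1 ≤ x) (hxn : x ≤ n) :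
    (avoidSet T A x).ncard = ∑ k ∈ Finset.Icc x n, (k - x + 1) * gapCount T A k :=
  card_avoidSet_eq_sum_gaps_general T A x hx hxn
end

section
/- Let I be a nonempty finite set, let f : I → ℕ be injective, and let t ∈ I be such that f(t) is not the maximum of f over I. Then for every k ∈ ℕ, Σ_{A ⊆ I, t ∈ A, min_A f = k} (−1)^{|A|+1} = 0; that is, the signed count of subsets of I containing t whose minimum f-value equals k vanishes. (This is the 'no histogram update' case of Theorem 2 of the paper, where f(e) = tesla(e, i−1) and t is the item seen at index i.) -/
/-! Adding an element `m` with `f t ≤ f m` to a set containing `t` leaves `min_A f` unchanged, so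
toggling a maximiser `m ≠ t` of `f` is a sign-reversing involution on the subsets counted, and
they cancel in pairs. -/

/-- `min_A f` : the minimum of `f` over the (nonempty) finite set `A`. -/
noncomputable def minOn' {α : Type*} (f : α → ℕ) (A : Finset α) : ℕ :=
  sInf (f '' ↑A)

open Finset

theorem minOn'_insert_of_le {α : Type*} [DecidableEq α] {f : α → ℕ} {A : Finset α} {a b : α}
    (hb : b ∈ A) (hba : f b ≤ f a) : minOn' f (insert a A) = minOn' f A := by
  have hmin_le : minOn' f A ≤ f b := Nat.sInf_le ⟨b, hb, rfl⟩
  rw [minOn', coe_insert, Set.image_insert_eq, csInf_insert (OrderBot.bddBelow _)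
    (Set.Nonempty.image f ⟨b, hb⟩), ← minOn', min_eq_right (hmin_le.trans hba)]

theorem Finset.sum_filter_powerset_neg_one_pow_card_eq_zero {α : Type*} [DecidableEq α]
    {s : Finset α} {a : α} (ha : a ∈ s) {p : Finset α → Prop} [DecidablePred p]
    (hp : ∀ A ⊆ s.erase a, p (insert a A) ↔ p A) :
    ∑ A ∈ s.powerset.filter p, (-1 : ℤ) ^ A.card = 0 := by
  rw [sum_filter, ← insert_erase ha, sum_powerset_insert (notMem_erase a s), ← sum_add_distrib]
  refine sum_eq_zero fun A hA => ?_
  have haA : a ∉ A := fun h => notMem_erase a s (mem_powerset.1 hA h)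
  simp only [hp A (mem_powerset.1 hA), card_insert_of_notMem haA, pow_succ]
  split_ifs <;> ring

theorem signed_count_not_max_general {α : Type*} [DecidableEq α]
    (I : Finset α) (f : α → ℕ)
    (t : α) (ht : t ∈ I) (hmax : f t ≠ I.sup f) (k : ℕ) :
    ∑ A ∈ I.powerset.filter (fun A => t ∈ A ∧ minOn' f A = k),
      (-1 : ℤ) ^ (A.card + 1) = 0 := by
  obtain ⟨m, hmI, hm⟩ := exists_mem_eq_sup I ⟨t, ht⟩ f
  have hmt : m ≠ t := by
    rintro rfl
    exact hmax hm.symm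
  have htm : f t ≤ f m := hm ▸ le_sup ht
  simp_rw [pow_succ, ← sum_mul]
  rw [sum_filter_powerset_neg_one_pow_card_eq_zero hmI, zero_mul]
  intro A _
  rw [mem_insert, or_iff_right hmt.symm]
  exact and_congr_right fun htA => by rw [minOn'_insert_of_le htA htm]

/-- If the item `t ∈ I` does not attain the maximum of `f` over `I`
(`f e` is the time elapsed since `e` was last seen), then for every `k` the
signed count of subsets `A ⊆ I` containing `t` with `min_A f = k` vanishes:
no histogram update takes place. -/
theorem signed_count_not_max {α : Type*} [DecidableEq α]
    (I : Finset α) (hI : I.Nonempty) (f : α → ℕ) (hf : Set.InjOn f ↑I)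
    (t : α) (ht : t ∈ I) (hmax : f t ≠ I.sup f) (k : ℕ) :
    ∑ A ∈ I.powerset.filter (fun A => t ∈ A ∧ minOn' f A = k),
      (-1 : ℤ) ^ (A.card + 1) = 0 :=
  signed_count_not_max_general I f t ht hmax k
end

section
/- Let I be a finite set with |I| ≥ 2, let f : I → ℕ be injective, and let t ∈ I be such that f(t) = max_{e∈I} f(e). Then for every k ∈ ℕ, the signed count Σ_{A ⊆ I, t ∈ A, min_A f = k} (−1)^{|A|+1} equals 1 if k = f(t), equals −1 if k = max_{e ∈ I∖{t}} f(e), and equals 0 otherwise. (This is the update rule of Theorem 2 of the paper: when the item t observed at index i is the least recently seen item, the gap histogram is incremented at the tesla value of t and decremented at the tesla value of the second least recently seen item.) -/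
/-!
Write `k = f e` for the unique `e ∈ I` with that value (otherwise every term vanishes). Since `t`
carries the largest value, a set `A ∋ t` has minimum `f e` exactly when `{e, t} ⊆ A ⊆ U`, where
`U = {x ∈ I | f e ≤ f x}`. The alternating sum of `(-1)^|A|` over a Boolean interval `[P, U]`
vanishes unless `P = U`, and `U = {e, t}` happens only for `e = t` or for `e` the runner-up.
-/

/-- `min_A f` : the minimum of `f` over the (nonempty) finite set `A`. -/
noncomputable def finsetMinOn {α : Type*} (f : α → ℕ) (A : Finset α) : ℕ :=
  sInf (f '' ↑A)

open Finset

namespace Finset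

variable {α : Type*}

theorem sum_Icc_neg_one_pow_card [DecidableEq α] (s t : Finset α) :
    ∑ u ∈ Icc s t, (-1 : ℤ) ^ #u = if s = t then (-1) ^ #s else 0 := by
  by_cases hst : s ⊆ t
  · have hunion : ∀ u ∈ (t \ s).powerset, (-1 : ℤ) ^ #(s ∪ u) = (-1) ^ #s * (-1) ^ #u :=
      fun u hu => by
        rw [card_union_of_disjoint (disjoint_of_subset_right (mem_powerset.1 hu)
          disjoint_sdiff), pow_add]
    have hinj : Set.InjOn (s ∪ ·) ((t \ s).powerset : Set (Finset α)) := fun u hu v hv huv => by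
      simp only [coe_powerset, Set.mem_preimage, Set.mem_powerset_iff, coe_subset] at hu hv
      rw [← union_sdiff_cancel_left (disjoint_of_subset_right hu disjoint_sdiff),
        ← union_sdiff_cancel_left (disjoint_of_subset_right hv disjoint_sdiff)]
      exact congrArg (· \ s) huv
    rw [Icc_eq_image_powerset hst, sum_image hinj, sum_congr rfl hunion, ← mul_sum,
      sum_powerset_neg_one_pow_card]
    have hsdiff : t \ s = ∅ ↔ s = t :=
      sdiff_eq_empty_iff_subset.trans ⟨hst.antisymm, fun h => h.ge⟩
    by_cases h : s = t <;> simp [h, hsdiff]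
  · rw [Icc_eq_empty (fun h => hst h), sum_empty, if_neg (fun h => hst h.le)]

theorem filter_apply_le_eq_singleton_iff {S : Finset α} {f : α → ℕ} (hf : Set.InjOn f S)
    {e : α} (he : e ∈ S) : S.filter (fun x => f e ≤ f x) = {e} ↔ f e = S.sup f := by
  constructor
  · intro h
    refine le_antisymm (le_sup he) (Finset.sup_le fun x hx => ?_)
    by_contra hlt
    have hx : x ∈ S.filter (fun x => f e ≤ f x) := mem_filter.2 ⟨hx, (not_le.1 hlt).le⟩
    rw [h, mem_singleton] at hx
    exact hlt (hx ▸ le_rfl)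
  · intro h
    ext x
    simp only [mem_filter, mem_singleton]
    constructor
    · rintro ⟨hx, hex⟩
      exact hf hx he (le_antisymm (h ▸ le_sup hx) hex)
    · rintro rfl
      exact ⟨he, le_rfl⟩

theorem pair_eq_iff_erase_eq_singleton [DecidableEq α] {U : Finset α} {e t : α}
    (htU : t ∈ U) (het : e ≠ t) : {e, t} = U ↔ U.erase t = {e} := by
  constructor
  · rintro rfl
    rw [pair_comm, erase_insert (by simpa using het.symm)]
  · intro h
    rw [← insert_erase htU, h, pair_comm]

end Finset

section finsetMinOn

variable {α : Type*} {f : α → ℕ} {A S : Finset α}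

theorem finsetMinOn_eq_inf' (hA : A.Nonempty) : finsetMinOn f A = A.inf' hA f :=
  (inf'_eq_csInf_image A hA f).symm

theorem exists_mem_apply_eq_finsetMinOn (hA : A.Nonempty) : ∃ a ∈ A, f a = finsetMinOn f A := by
  obtain ⟨a, ha, hfa⟩ := exists_mem_eq_inf' hA f
  exact ⟨a, ha, (finsetMinOn_eq_inf' hA).trans hfa |>.symm⟩

theorem finsetMinOn_eq_apply_iff (hf : Set.InjOn f S) (hAS : A ⊆ S) (hA : A.Nonempty) {e : α}
    (he : e ∈ S) : finsetMinOn f A = f e ↔ e ∈ A ∧ ∀ x ∈ A, f e ≤ f x := by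
  constructor
  · intro hmin
    obtain ⟨a, ha, hfa⟩ := exists_mem_apply_eq_finsetMinOn (f := f) hA
    refine ⟨hf (hAS ha) he (hfa.trans hmin) ▸ ha, fun x hx => ?_⟩
    rw [← hmin, finsetMinOn_eq_inf' hA]
    exact inf'_le f hx
  · rintro ⟨heA, hle⟩
    rw [finsetMinOn_eq_inf' hA]
    exact le_antisymm (inf'_le f heA) (le_inf' hA f hle)

theorem filter_mem_finsetMinOn_eq_apply [DecidableEq α] (hf : Set.InjOn f S) {e t : α}
    (he : e ∈ S) :
    S.powerset.filter (fun A => t ∈ A ∧ finsetMinOn f A = f e) =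
      Icc {e, t} (S.filter (fun x => f e ≤ f x)) := by
  ext A
  simp only [mem_filter, mem_powerset, mem_Icc, insert_subset_iff, singleton_subset_iff,
    subset_iff (s₂ := S.filter _), mem_filter]
  constructor
  · rintro ⟨hAS, htA, hmin⟩
    obtain ⟨heA, hle⟩ := (finsetMinOn_eq_apply_iff hf hAS ⟨t, htA⟩ he).1 hmin
    exact ⟨⟨heA, htA⟩, fun x hx => ⟨hAS hx, hle x hx⟩⟩
  · rintro ⟨⟨heA, htA⟩, hAU⟩
    have hAS : A ⊆ S := fun x hx => (hAU hx).1
    exact ⟨hAS, htA, (finsetMinOn_eq_apply_iff hf hAS ⟨t, htA⟩ he).2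
      ⟨heA, fun x hx => (hAU hx).2⟩⟩

end finsetMinOn

/-- Update rule of the gap histogram (Theorem 2): if the item `t ∈ I` attains the
maximum of `f` over `I` (i.e. `t` is the least recently seen item), then the signed
count of subsets `A ⊆ I` containing `t` with `min_A f = k` is `+1` at `k = f t`,
`-1` at `k = max_{e ∈ I \ {t}} f e`, and `0` elsewhere. -/
theorem signed_count_max {α : Type*} [DecidableEq α]
    (I : Finset α) (hcard : 2 ≤ I.card) (f : α → ℕ) (hf : Set.InjOn f ↑I)
    (t : α) (ht : t ∈ I) (hmax : f t = I.sup f) (k : ℕ) :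
    ∑ A ∈ I.powerset.filter (fun A => t ∈ A ∧ finsetMinOn f A = k),
        (-1 : ℤ) ^ (A.card + 1) =
      if k = f t then 1 else if k = (I.erase t).sup f then -1 else 0 := by
  by_cases hk : ∃ e ∈ I, f e = k
  · obtain ⟨e, he, rfl⟩ := hk
    simp only [pow_succ, mul_neg_one, sum_neg_distrib]
    rw [filter_mem_finsetMinOn_eq_apply hf he, sum_Icc_neg_one_pow_card]
    rcases eq_or_ne e t with rfl | het
    · rw [pair_eq_singleton, (filter_apply_le_eq_singleton_iff hf he).2 hmax]
      simp
    · have hfet : f e ≠ f t := fun h => het (hf he ht h)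
      have htU : t ∈ I.filter (fun x => f e ≤ f x) := mem_filter.2 ⟨ht, hmax ▸ le_sup he⟩
      have hrunner_up : {e, t} = I.filter (fun x => f e ≤ f x) ↔ f e = (I.erase t).sup f := by
        rw [pair_eq_iff_erase_eq_singleton htU het, ← filter_erase,
          filter_apply_le_eq_singleton_iff (hf.mono (by simp)) (mem_erase.2 ⟨het, he⟩)]
      simp [hfet, hrunner_up, card_pair het, apply_ite]
  · obtain ⟨e, he, hsup⟩ := exists_mem_eq_sup (I.erase t)
      (by rw [← card_pos, card_erase_of_mem ht]; omega) f
    rw [if_neg fun h => hk ⟨t, ht, h.symm⟩,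
      if_neg fun h => hk ⟨e, mem_of_mem_erase he, by rw [← hsup, h]⟩]
    refine sum_eq_zero fun A hA => absurd ?_ hk
    obtain ⟨hAI, htA, hmin⟩ := by simpa only [mem_filter, mem_powerset] using hA
    obtain ⟨a, ha, hfa⟩ := exists_mem_apply_eq_finsetMinOn (f := f) ⟨t, htA⟩
    exact ⟨a, hAI ha, hfa.trans hmin⟩
end

section
/- Let I be a nonempty finite set and let f : I → ℕ be injective. Then for every k ∈ ℕ, Σ_{∅ ≠ A ⊆ I, min_A f = k} (−1)^{|A|+1} equals 1 if k = max_{e∈I} f(e) and equals 0 otherwise. (This is the end-of-sequence update of the paper: when all gaps close at the end of the sequence, the net histogram update is +1 at the tesla value of the item seen furthest in the past and 0 elsewhere.) -/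
/-- `min_A f` : the minimum of `f` over the (nonempty) finite set `A`. -/
noncomputable def sigMinOn {α : Type*} (f : α → ℕ) (A : Finset α) : ℕ :=
  sInf (f '' ↑A)

/-!
The subsets of `I` whose minimum is `k` are empty unless `k = f e` for some `e ∈ I`; by
injectivity `e` is then unique, and these subsets are exactly `insert e B` for `B` ranging over
the subsets of `S = {x ∈ I | f e < f x}`. Hence the signed count is `∑_{B ⊆ S} (-1)^|B|`, which
is `1` if `S = ∅`, i.e. if `f e` is the maximum of `f` on `I`, and `0` otherwise.
-/

namespace Finset

variable {α : Type*} {f : α → ℕ}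

theorem sigMinOn_eq_inf' {A : Finset α} (hA : A.Nonempty) : sigMinOn f A = A.inf' hA f :=
  (inf'_eq_csInf_image A hA f).symm

theorem exists_mem_eq_sigMinOn {A : Finset α} (hA : A.Nonempty) : ∃ a ∈ A, sigMinOn f A = f a :=
  sigMinOn_eq_inf' (f := f) hA ▸ exists_mem_eq_inf' hA f

theorem filter_sigMinOn_eq_image_insert [DecidableEq α] {I : Finset α} (hf : Set.InjOn f I)
    {e : α} (he : e ∈ I) :
    I.powerset.filter (fun A => A.Nonempty ∧ sigMinOn f A = f e) =
      (I.filter (f e < f ·)).powerset.image (insert e) := by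
  ext A
  simp only [mem_filter, mem_powerset, mem_image]
  constructor
  · rintro ⟨hAI, hA, hmin⟩
    obtain ⟨a, ha, hfa⟩ := exists_mem_eq_sigMinOn (f := f) hA
    obtain rfl : a = e := hf (hAI ha) he (hfa.symm.trans hmin)
    refine ⟨A.erase a, fun x hx => ?_, insert_erase ha⟩
    obtain ⟨hxa, hxA⟩ := mem_erase.mp hx
    have hle : f a ≤ f x := hmin ▸ sigMinOn_eq_inf' (f := f) hA ▸ inf'_le f hxA
    exact mem_filter.mpr ⟨hAI hxA, hle.lt_of_ne fun h => hxa (hf (hAI hxA) he h.symm)⟩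
  · rintro ⟨B, hBS, rfl⟩
    have hBI : B ⊆ I := hBS.trans (filter_subset _ _)
    refine ⟨insert_subset he hBI, insert_nonempty e B, ?_⟩
    rw [sigMinOn_eq_inf' (insert_nonempty e B)]
    refine le_antisymm (inf'_le f (mem_insert_self e B)) (le_inf' _ _ fun x hx => ?_)
    rcases mem_insert.mp hx with rfl | hxB
    · exact le_rfl
    · exact ((mem_filter.mp (hBS hxB)).2).le

theorem filter_lt_eq_empty_iff_eq_sup {I : Finset α} {e : α} (he : e ∈ I) :
    I.filter (f e < f ·) = ∅ ↔ f e = I.sup f := by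
  simp only [filter_eq_empty_iff, not_lt]
  exact ⟨fun h => le_antisymm (le_sup he) (Finset.sup_le h),
    fun h x hx => h ▸ le_sup hx⟩

theorem sum_filter_sigMinOn_eq [DecidableEq α] {I : Finset α} (hf : Set.InjOn f I) {e : α}
    (he : e ∈ I) :
    ∑ A ∈ I.powerset.filter (fun A => A.Nonempty ∧ sigMinOn f A = f e),
        (-1 : ℤ) ^ (A.card + 1) =
      if f e = I.sup f then 1 else 0 := by
  set S := I.filter (f e < f ·)
  have heS : ∀ B ∈ S.powerset, e ∉ B := fun B hB heB =>
    (mem_filter.mp (mem_powerset.mp hB heB)).2.false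
  have hinj : Set.InjOn (insert e) (S.powerset : Set (Finset α)) := fun B hB C hC h => by
    rw [← erase_insert (heS B hB), h, erase_insert (heS C hC)]
  rw [filter_sigMinOn_eq_image_insert hf he, sum_image hinj,
    ← if_congr (filter_lt_eq_empty_iff_eq_sup he) rfl rfl, ← sum_powerset_neg_one_pow_card]
  refine sum_congr rfl fun B hB => ?_
  rw [card_insert_of_notMem (heS B hB), pow_add, pow_add]
  simp

end Finset

open Finset in
theorem signed_count_end_general {α : Type*}
    (I : Finset α) (hI : I.Nonempty) (f : α → ℕ) (hf : Set.InjOn f ↑I) (k : ℕ) :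
    ∑ A ∈ I.powerset.filter (fun A => A.Nonempty ∧ sigMinOn f A = k),
        (-1 : ℤ) ^ (A.card + 1) =
      if k = I.sup f then 1 else 0 := by
  classical
  by_cases hk : ∃ e ∈ I, f e = k
  · obtain ⟨e, he, rfl⟩ := hk
    exact sum_filter_sigMinOn_eq hf he
  · simp only [not_exists, not_and] at hk
    have hk_ne_sup : k ≠ I.sup f := fun hk_sup => by
      obtain ⟨e, he, hfe⟩ := exists_mem_eq_sup I hI f
      exact hk e he (hfe ▸ hk_sup).symm
    rw [if_neg hk_ne_sup]
    refine sum_eq_zero fun A hA => absurd hA ?_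
    simp only [mem_filter, mem_powerset, not_and]
    intro hAI hA hmin
    obtain ⟨a, ha, hfa⟩ := exists_mem_eq_sigMinOn (f := f) hA
    exact hk a (hAI ha) (hfa ▸ hmin)

/-- End-of-sequence update: the signed count over all nonempty subsets `A ⊆ I`
with `min_A f = k` is `+1` at `k = max_{e ∈ I} f e` and `0` elsewhere. -/
theorem signed_count_end {α : Type*} [DecidableEq α]
    (I : Finset α) (hI : I.Nonempty) (f : α → ℕ) (hf : Set.InjOn f ↑I) (k : ℕ) :
    ∑ A ∈ I.powerset.filter (fun A => A.Nonempty ∧ sigMinOn f A = k),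
        (-1 : ℤ) ^ (A.card + 1) =
      if k = I.sup f then 1 else 0 :=
  signed_count_end_general I hI f hf k
end

section
/- Let I be a finite set, let f : I → ℕ be injective, and let X be a nonempty proper subset of I such that f(a) > f(e) for every a ∈ X and e ∈ I∖X (every item of X was seen further in the past than every item outside X). Then for every k ∈ ℕ, the signed count Σ_{A ⊆ I, A ∩ X ≠ ∅, min_A f = k} (−1)^{|A|+1}, taken over all subsets of I meeting X, equals 1 if k = max_{e∈I} f(e), equals −1 if k = max_{e∈I∖X} f(e), and equals 0 otherwise. (This is the multiple-item update rule of Theorem 6 of the paper, in the form consistent with its Figure 3 and specializing to Theorem 2 when |X| = 1: the histogram is incremented at the tesla value of the item seen furthest in the past and decremented at the largest tesla value among items outside X.) -/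
/-!
A nonempty set `A` has `min_A f = k` exactly when `A ⊆ {f ≥ k}` but `A ⊄ {f > k}`. Since the
alternating sum `∑ (-1)^(|A|+1)` over the nonempty subsets of a finite set is `1` or `0` according
as the set is nonempty or empty, the signed count over the nonempty subsets of `S` is
`[k ≤ max_S f] - [k < max_S f] = [k = max_S f]`. The subsets of `I` meeting `X` are those of `I`
minus those of `I \ X`, so the count is `[k = max_I f] - [k = max_{I∖X} f]`, and the separation
hypothesis makes the two maxima distinct.
-/

/-- `min_A f` : the minimum of `f` over the (nonempty) finite set `A`. -/
noncomputable def minOnF {α : Type*} (f : α → ℕ) (A : Finset α) : ℕ :=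
  sInf (f '' ↑A)

open Finset

theorem sum_powerset_filter_nonempty_neg_one_pow_card_succ {β : Type*} (V : Finset β) :
    ∑ A ∈ V.powerset with A.Nonempty, (-1 : ℤ) ^ (#A + 1) = if V.Nonempty then 1 else 0 := by
  classical
  have : V.powerset.filter (·.Nonempty) = V.powerset.erase ∅ := by
    ext A; simp [nonempty_iff_ne_empty, and_comm]
  rw [this, sum_erase_eq_sub (empty_mem_powerset V)]
  simp only [pow_succ, mul_neg_one, sum_neg_distrib, sum_powerset_neg_one_pow_card, card_empty]
  rcases V.eq_empty_or_nonempty with rfl | hV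
  · simp
  · simp [hV, hV.ne_empty]

section
variable {α : Type*} (f : α → ℕ)

theorem minOnF_eq_iff {A : Finset α} (hA : A.Nonempty) {k : ℕ} :
    minOnF f A = k ↔ (∀ a ∈ A, k ≤ f a) ∧ ∃ a ∈ A, f a ≤ k := by
  rw [minOnF, csInf_eq_iff ((coe_nonempty.2 hA).image f) k, Set.forall_mem_image]
  constructor
  · rintro ⟨⟨a, ha, rfl⟩, hle⟩
    exact ⟨hle, a, ha, le_rfl⟩
  · rintro ⟨hle, a, ha, hak⟩
    exact ⟨⟨a, ha, le_antisymm hak (hle a ha)⟩, hle⟩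

variable [DecidableEq α]

theorem powerset_filter_minOnF_eq_sdiff (S : Finset α) (k : ℕ) :
    S.powerset.filter (fun A => A.Nonempty ∧ minOnF f A = k) =
      (S.filter (k ≤ f ·)).powerset.filter (·.Nonempty) \
        (S.filter (k < f ·)).powerset.filter (·.Nonempty) := by
  ext A
  simp only [mem_sdiff, mem_filter, mem_powerset, subset_iff]
  by_cases hA : A.Nonempty
  · rw [minOnF_eq_iff f hA]
    grind
  · simp [hA]

theorem sum_powerset_filter_minOnF_eq {S : Finset α} (hS : S.Nonempty) (k : ℕ) :
    ∑ A ∈ S.powerset with A.Nonempty ∧ minOnF f A = k, (-1 : ℤ) ^ (#A + 1) =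
      if k = S.sup f then 1 else 0 := by
  obtain ⟨m, hm, hsup⟩ := exists_mem_eq_sup S hS f
  have hle : (S.filter (k ≤ f ·)).Nonempty ↔ k ≤ S.sup f :=
    ⟨fun ⟨x, hx⟩ => (mem_filter.1 hx).2.trans (le_sup (mem_filter.1 hx).1),
      fun h => ⟨m, mem_filter.2 ⟨hm, hsup ▸ h⟩⟩⟩
  have hlt : (S.filter (k < f ·)).Nonempty ↔ k < S.sup f := by
    rw [Finset.lt_sup_iff, filter_nonempty_iff]
  rw [powerset_filter_minOnF_eq_sdiff, sum_sdiff_eq_sub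
      (filter_subset_filter _ (powerset_mono.2 (monotone_filter_right S fun _ _ h => h.le))),
    sum_powerset_filter_nonempty_neg_one_pow_card_succ,
    sum_powerset_filter_nonempty_neg_one_pow_card_succ]
  simp only [hle, hlt]
  split_ifs <;> omega

theorem powerset_filter_inter_nonempty_eq_sdiff (I X : Finset α) (p : Finset α → Prop)
    [DecidablePred p] :
    I.powerset.filter (fun A => (A ∩ X).Nonempty ∧ p A) =
      I.powerset.filter (fun A => A.Nonempty ∧ p A) \
        (I \ X).powerset.filter (fun A => A.Nonempty ∧ p A) := by
  ext A
  simp only [mem_sdiff, mem_filter, mem_powerset]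
  have hAX : ¬Disjoint A X → A.Nonempty := fun h =>
    (not_disjoint_iff_nonempty_inter.1 h).mono inter_subset_left
  rw [subset_sdiff, ← not_disjoint_iff_nonempty_inter]
  tauto

theorem sup_sdiff_lt_sup {I X : Finset α} (hXne : X.Nonempty) (hX : X ⊂ I)
    (hsep : ∀ a ∈ X, ∀ e ∈ I \ X, f e < f a) : (I \ X).sup f < I.sup f := by
  obtain ⟨a, ha⟩ := hXne
  obtain ⟨e, he, hsup⟩ := exists_mem_eq_sup (I \ X) (sdiff_nonempty.2 hX.2) f
  exact hsup ▸ (hsep a ha e he).trans_le (le_sup (hX.1 ha))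

end

theorem signed_count_multi_general {α : Type*} [DecidableEq α]
    (I : Finset α) (f : α → ℕ)
    (X : Finset α) (hXne : X.Nonempty) (hX : X ⊂ I)
    (hsep : ∀ a ∈ X, ∀ e ∈ I \ X, f e < f a) (k : ℕ) :
    ∑ A ∈ I.powerset.filter (fun A => (A ∩ X).Nonempty ∧ minOnF f A = k),
        (-1 : ℤ) ^ (A.card + 1) =
      if k = I.sup f then 1 else if k = (I \ X).sup f then -1 else 0 := by
  rw [powerset_filter_inter_nonempty_eq_sdiff,
    sum_sdiff_eq_sub (filter_subset_filter _ (powerset_mono.2 sdiff_subset)),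
    sum_powerset_filter_minOnF_eq f (hXne.mono hX.1),
    sum_powerset_filter_minOnF_eq f (sdiff_nonempty.2 hX.2)]
  have hlt := sup_sdiff_lt_sup f hXne hX hsep
  split_ifs <;> omega

/-- Multiple-item update rule (Theorem 6): if every item of the nonempty proper
subset `X ⊂ I` was seen further in the past than every item of `I \ X`
(`f a > f e` for `a ∈ X`, `e ∈ I \ X`), then the signed count of subsets `A ⊆ I`
meeting `X` with `min_A f = k` is `+1` at `k = max_{e ∈ I} f e`, `-1` at
`k = max_{e ∈ I \ X} f e`, and `0` elsewhere. -/
theorem signed_count_multi {α : Type*} [DecidableEq α]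
    (I : Finset α) (f : α → ℕ) (hf : Set.InjOn f ↑I)
    (X : Finset α) (hXne : X.Nonempty) (hX : X ⊂ I)
    (hsep : ∀ a ∈ X, ∀ e ∈ I \ X, f e < f a) (k : ℕ) :
    ∑ A ∈ I.powerset.filter (fun A => (A ∩ X).Nonempty ∧ minOnF f A = k),
        (-1 : ℤ) ^ (A.card + 1) =
      if k = I.sup f then 1 else if k = (I \ X).sup f then -1 else 0 :=
  signed_count_multi_general I f X hXne hX hsep k
end
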